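/- Let r > 1 be a real number, let η_N := 2^{−8r}, and let η_M := H₂(η_N)/(H₂(η_N) + 2). Then 2r·η_N ≤ H₂(η_N)/4 ≤ η_M ≤ H₂(η_N)/2 < −η_N·log₂(η_N) < 2^{−4r} < 0.1. In particular, 0 < η_N < η_M < 0.1 and η_M ≥ 2r·η_N. -/

import Mathlib

open scoped ENNReal

/-- The binary entropy function `H₂(x) = −x·log₂ x − (1−x)·log₂(1−x)`. -/
noncomputable def H2 (x : ℝ) : ℝ :=
  -x * Real.logb 2 x - (1 - x) * Real.logb 2 (1 - x)

/-!
With `a = 2^{-4r}` we have `η_N = a²` and `-η_N log₂ η_N = 8r·η_N`, while the second term of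
`H₂(η_N)` lies in `[0, 2η_N]`. Hence `8r·η_N ≤ H₂(η_N) ≤ (8r + 2)·η_N < 16r·η_N`, and since
`8r < 2^{4r}` (Bernoulli) the main term `8r·a²` is below `a < 1/16`. In particular `H₂(η_N) ≤ 2`,
which is exactly what puts `η_M = H₂/(H₂ + 2)` between `H₂/4` and `H₂/2`.
-/

open Real

lemma neg_mul_log_one_sub_le {x : ℝ} (hx : x < 1) : -((1 - x) * log (1 - x)) ≤ x := by
  have hpos : 0 < 1 - x := by linarith
  have h := one_sub_inv_le_log_of_pos hpos
  calc -((1 - x) * log (1 - x)) ≤ (1 - x) * ((1 - x)⁻¹ - 1) := by nlinarith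
    _ = x := by field_simp; ring

lemma neg_mul_logb_le_H2 {x : ℝ} (h0 : 0 ≤ x) (h1 : x ≤ 1) : -x * logb 2 x ≤ H2 x := by
  have := logb_nonpos one_lt_two (sub_nonneg.2 h1) (by linarith : 1 - x ≤ 1)
  unfold H2
  nlinarith

lemma H2_le_neg_mul_logb_add_two_mul {x : ℝ} (h0 : 0 ≤ x) (h1 : x < 1) :
    H2 x ≤ -x * logb 2 x + 2 * x := by
  have hlog2 : 1 / 2 < log 2 := by linarith [log_two_gt_d9]
  have hT : -((1 - x) * log (1 - x)) / log 2 ≤ 2 * x := by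
    rw [div_le_iff₀ (by linarith)]
    nlinarith [neg_mul_log_one_sub_le h1]
  unfold H2
  rw [logb, logb]
  have : -((1 - x) * (log (1 - x) / log 2)) = -((1 - x) * log (1 - x)) / log 2 := by ring
  linarith

lemma eight_mul_lt_two_rpow_four_mul {r : ℝ} (hr : 1 ≤ r) : 8 * r < (2 : ℝ) ^ (4 * r) := by
  have h := one_add_mul_self_le_rpow_one_add (by norm_num : (-1 : ℝ) ≤ 15) hr
  rw [rpow_mul zero_le_two]
  norm_num at h ⊢
  linarith

lemma eight_mul_mul_two_rpow_neg_four_mul_lt_one {r : ℝ} (hr : 1 ≤ r) :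
    8 * r * (2 : ℝ) ^ (-(4 * r)) < 1 := by
  rw [rpow_neg zero_le_two, ← div_eq_mul_inv, div_lt_one (by positivity)]
  exact eight_mul_lt_two_rpow_four_mul hr

lemma two_rpow_neg_four_mul_lt {r : ℝ} (hr : 1 < r) : (2 : ℝ) ^ (-(4 * r)) < 1 / 16 := by
  calc (2 : ℝ) ^ (-(4 * r)) < (2 : ℝ) ^ (-4 : ℝ) :=
        rpow_lt_rpow_of_exponent_lt one_lt_two (by linarith)
    _ = 1 / 16 := by norm_num

lemma div_four_le_div_add_two {h : ℝ} (h0 : 0 ≤ h) (h2 : h ≤ 2) : h / 4 ≤ h / (h + 2) := by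
  rw [div_le_div_iff₀ (by norm_num) (by linarith)]
  nlinarith

lemma div_add_two_le_div_two {h : ℝ} (h0 : 0 ≤ h) : h / (h + 2) ≤ h / 2 :=
  div_le_div_of_nonneg_left h0 two_pos (by linarith)

/-- For `r > 1`, `η_N := 2^{−8r}` and
`η_M := H₂(η_N)/(H₂(η_N)+2)` we have the chain of inequalities
`2r·η_N ≤ H₂(η_N)/4 ≤ η_M ≤ H₂(η_N)/2 < −η_N·log₂ η_N < 2^{−4r} < 0.1`; in particular
`0 < η_N < η_M < 0.1` and `η_M ≥ 2r·η_N`. -/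
theorem noise_rate_parameters
    (r ηN ηM : ℝ) (hr : 1 < r)
    (hηN : ηN = (2 : ℝ) ^ (-(8 * r)))
    (hηM : ηM = H2 ηN / (H2 ηN + 2)) :
    (2 * r * ηN ≤ H2 ηN / 4 ∧ H2 ηN / 4 ≤ ηM ∧ ηM ≤ H2 ηN / 2 ∧
      H2 ηN / 2 < -ηN * Real.logb 2 ηN ∧
      -ηN * Real.logb 2 ηN < (2 : ℝ) ^ (-(4 * r)) ∧ (2 : ℝ) ^ (-(4 * r)) < 0.1) ∧
    (0 < ηN ∧ ηN < ηM ∧ ηM < 0.1 ∧ 2 * r * ηN ≤ ηM) := by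
  set a : ℝ := (2 : ℝ) ^ (-(4 * r))
  have hx_pos : 0 < ηN := hηN ▸ by positivity
  have hx_eq : ηN = a * a := by rw [hηN, ← rpow_add two_pos]; ring_nf
  have ha_lt : a < 1 / 16 := two_rpow_neg_four_mul_lt hr
  have hself : -ηN * logb 2 ηN = 8 * r * ηN := by
    rw [hηN, logb_rpow two_pos (by norm_num)]; ring
  have hmain_lt : 8 * r * ηN < a := by
    have := mul_lt_mul_of_pos_right (eight_mul_mul_two_rpow_neg_four_mul_lt_one hr.le)
      (by positivity : 0 < a)
    rw [hx_eq]; linarith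
  have hH_lb := neg_mul_logb_le_H2 hx_pos.le (by nlinarith)
  have hH_ub := H2_le_neg_mul_logb_add_two_mul hx_pos.le (by nlinarith)
  rw [hself] at hH_lb hH_ub ⊢
  have hM_lb : H2 ηN / 4 ≤ ηM := hηM ▸ div_four_le_div_add_two (by nlinarith) (by nlinarith)
  have hM_ub : ηM ≤ H2 ηN / 2 := hηM ▸ div_add_two_le_div_two (by nlinarith)
  have hH_lt : H2 ηN / 2 < 8 * r * ηN := by nlinarith
  exact ⟨⟨by linarith, hM_lb, hM_ub, hH_lt, hmain_lt, by linarith⟩, hx_pos, by nlinarith,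
    by linarith, by linarith⟩
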